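/- The Gini index G(X) = 1 − 2∫₀¹ L_X(u) du of a nonnegative mean-one random variable is nondecreasing along a martingale: if E[X₂|X₁] = X₁ a.s. and E[X₁]=E[X₂]=1, then G(X₁) ≤ G(X₂). -/

import Mathlib

open MeasureTheory ProbabilityTheory
open scoped ProbabilityTheory

/-- Cumulative distribution function of a random variable `X`. -/
noncomputable def cdfOf {Ω : Type*} [MeasureSpace Ω] (X : Ω → ℝ) (x : ℝ) : ℝ :=
  (ℙ {ω | X ω ≤ x}).toReal

/-- Generalized inverse (quantile function) of a CDF `F`:
`F⁻¹(u) = inf {x : F x ≥ u}`. -/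
noncomputable def quantile (F : ℝ → ℝ) (u : ℝ) : ℝ :=
  sInf {x : ℝ | u ≤ F x}

/-- Lorenz curve of a random variable `X`: `L(u) = ∫₀ᵘ F⁻¹(τ) dτ`. -/
noncomputable def lorenz {Ω : Type*} [MeasureSpace Ω] (X : Ω → ℝ) (u : ℝ) : ℝ :=
  ∫ τ in (0:ℝ)..u, quantile (cdfOf X) τ

/-- Gini index `G(X) = 1 − 2∫₀¹ L_X(u) du`. -/
noncomputable def gini {Ω : Type*} [MeasureSpace Ω] (X : Ω → ℝ) : ℝ :=
  1 - 2 * ∫ u in (0:ℝ)..1, lorenz X u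

/-!
The quantile function `q = F⁻¹` of `X` pushes Lebesgue measure on `(0, 1)` forward to the law of
`X`. As `q` is monotone, this gives `L_X(u) = ∫₀ᵘ q = max_c (u c - E (c - X)⁺)`, the maximum being
attained at `c = q(u)`. Along a martingale, conditional Jensen gives `E (c - X₁)⁺ ≤ E (c - X₂)⁺`
for every `c`, hence `L_{X₂} ≤ L_{X₁}` pointwise, and integrating over `u` gives
`G(X₁) ≤ G(X₂)`.
-/

open Set Filter Topology

lemma convexOn_max_sub_zero (c : ℝ) : ConvexOn ℝ univ fun x : ℝ => max (c - x) 0 :=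
  ((convexOn_const c convex_univ).sub (concaveOn_id convex_univ)).sup
    (convexOn_const 0 convex_univ)

lemma continuous_max_sub_zero (c : ℝ) : Continuous fun x : ℝ => max (c - x) 0 := by
  fun_prop

lemma volume_Iic_inter_Ioo {c : ℝ} (hc : c ∈ Icc 0 1) :
    volume (Iic c ∩ Ioo 0 1) = ENNReal.ofReal c := by
  refine le_antisymm ?_ ?_
  · calc volume (Iic c ∩ Ioo 0 1) ≤ volume (Ioc 0 c) :=
          measure_mono fun τ hτ => ⟨hτ.2.1, hτ.1⟩
      _ = ENNReal.ofReal c := by rw [Real.volume_Ioc, sub_zero]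
  · calc ENNReal.ofReal c = volume (Ioo 0 c) := by rw [Real.volume_Ioo, sub_zero]
      _ ≤ volume (Iic c ∩ Ioo 0 1) :=
          measure_mono fun τ hτ => ⟨hτ.2.le, hτ.1, hτ.2.trans_le hc.2⟩

section Quantile

variable {μ : Measure ℝ} {τ : ℝ}

lemma bddBelow_setOf_le_cdf (hτ : 0 < τ) : BddBelow {x | τ ≤ cdf μ x} := by
  obtain ⟨x₀, hx₀⟩ := eventually_atBot.1 ((tendsto_cdf_atBot μ).eventually (gt_mem_nhds hτ))
  exact ⟨x₀, fun x hx => le_of_not_ge fun hxx₀ => (hx₀ x hxx₀).not_ge hx⟩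

lemma nonempty_setOf_le_cdf (hτ : τ < 1) : {x | τ ≤ cdf μ x}.Nonempty :=
  ((tendsto_cdf_atTop μ).eventually (le_mem_nhds hτ)).exists

lemma quantile_cdf_le_iff (hτ : τ ∈ Ioo 0 1) (x : ℝ) :
    quantile (cdf μ) τ ≤ x ↔ τ ≤ cdf μ x := by
  refine ⟨fun hx => ?_, fun hx => csInf_le (bddBelow_setOf_le_cdf hτ.1) hx⟩
  -- right continuity of the cdf puts the infimum itself in the set
  have hq : τ ≤ cdf μ (quantile (cdf μ) τ) := by
    refine ge_of_tendsto (((cdf μ).right_continuous _).mono Ioi_subset_Ici_self) ?_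
    filter_upwards [self_mem_nhdsWithin] with y hy
    obtain ⟨a, ha, hay⟩ := exists_lt_of_csInf_lt (nonempty_setOf_le_cdf hτ.2) hy
    exact ha.trans (monotone_cdf μ hay.le)
  exact hq.trans (monotone_cdf μ hx)

lemma monotoneOn_quantile_cdf : MonotoneOn (quantile (cdf μ)) (Ioo 0 1) :=
  fun _ ha _ hb hab => (quantile_cdf_le_iff ha _).2 <|
    hab.trans ((quantile_cdf_le_iff hb _).1 le_rfl)

variable (μ)

lemma aemeasurable_quantile_cdf :
    AEMeasurable (quantile (cdf μ)) (volume.restrict (Ioo 0 1)) :=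
  aemeasurable_restrict_of_monotoneOn measurableSet_Ioo monotoneOn_quantile_cdf

variable [IsProbabilityMeasure μ]

theorem map_quantile_cdf : (volume.restrict (Ioo 0 1)).map (quantile (cdf μ)) = μ := by
  have : IsFiniteMeasure (volume.restrict (Ioo (0 : ℝ) 1)) := by
    rw [isFiniteMeasure_restrict]; exact measure_Ioo_lt_top.ne
  refine Measure.ext_of_Iic _ _ fun x => ?_
  rw [Measure.map_apply_of_aemeasurable (aemeasurable_quantile_cdf μ) measurableSet_Iic,
    Measure.restrict_apply' measurableSet_Ioo, ← ofReal_cdf,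
    ← volume_Iic_inter_Ioo ⟨cdf_nonneg μ x, cdf_le_one μ x⟩]
  congr 1
  ext τ
  simp only [mem_inter_iff, mem_preimage, mem_Iic, and_congr_left_iff]
  exact fun hτ => quantile_cdf_le_iff hτ x

variable {μ}

lemma integral_comp_quantile_cdf {E : Type*} [NormedAddCommGroup E] [NormedSpace ℝ E]
    {g : ℝ → E} (hg : AEStronglyMeasurable g μ) :
    ∫ τ in Ioo 0 1, g (quantile (cdf μ) τ) = ∫ x, g x ∂μ := by
  rw [← integral_map (aemeasurable_quantile_cdf μ) ((map_quantile_cdf μ).symm ▸ hg),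
    map_quantile_cdf]

lemma MeasureTheory.Integrable.integrableOn_comp_quantile_cdf {ε : Type*} [TopologicalSpace ε]
    [ContinuousENorm ε] {g : ℝ → ε} (hg : Integrable g μ) :
    IntegrableOn (g ∘ quantile (cdf μ)) (Ioo 0 1) :=
  ((map_quantile_cdf μ).symm ▸ hg).comp_aemeasurable (aemeasurable_quantile_cdf μ)

end Quantile

section PosPart

variable {α : Type*} [MeasurableSpace α] {μ : Measure α} {f : α → ℝ} {s t : Set α}

lemma setIntegral_le_setIntegral_posPart (hf : IntegrableOn f t μ) (hst : s ⊆ t) :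
    ∫ x in s, f x ∂μ ≤ ∫ x in t, max (f x) 0 ∂μ :=
  calc ∫ x in s, f x ∂μ ≤ ∫ x in s, max (f x) 0 ∂μ :=
        integral_mono (hf.mono_set hst) (hf.mono_set hst).pos_part fun _ => le_max_left _ _
    _ ≤ ∫ x in t, max (f x) 0 ∂μ :=
        setIntegral_mono_set hf.pos_part (ae_of_all _ fun _ => le_max_right _ _) hst.eventuallyLE

lemma setIntegral_eq_setIntegral_posPart (hs : MeasurableSet s) (ht : MeasurableSet t)
    (hst : s ⊆ t) (hf_nonneg : ∀ x ∈ s, 0 ≤ f x) (hf_nonpos : ∀ x ∈ t \ s, f x ≤ 0) :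
    ∫ x in s, f x ∂μ = ∫ x in t, max (f x) 0 ∂μ := by
  rw [setIntegral_eq_of_subset_of_forall_sdiff_eq_zero ht hst
    fun x hx => max_eq_right (hf_nonpos x hx)]
  exact setIntegral_congr_fun hs fun x hx => (max_eq_left (hf_nonneg x hx)).symm

end PosPart

section Lorenz

variable {μ : Measure ℝ} [IsProbabilityMeasure μ] {u : ℝ}

lemma integrableOn_quantile_cdf (hμ : Integrable id μ) :
    IntegrableOn (quantile (cdf μ)) (Ioo 0 1) :=
  hμ.integrableOn_comp_quantile_cdf

lemma setIntegral_Ioo_quantile_cdf_sub (hμ : Integrable id μ) (hu : u ∈ Icc 0 1) (c : ℝ) :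
    ∫ τ in Ioo 0 u, (c - quantile (cdf μ) τ) = u * c - ∫ τ in Ioo 0 u, quantile (cdf μ) τ := by
  rw [integral_sub (f := fun _ => c) (integrableOn_const measure_Ioo_lt_top.ne)
      ((integrableOn_quantile_cdf hμ).mono_set (Ioo_subset_Ioo_right hu.2)),
    setIntegral_const, Real.volume_real_Ioo_of_le hu.1, sub_zero, smul_eq_mul]

theorem isGreatest_setIntegral_quantile_cdf (hμ : Integrable id μ) (hu : u ∈ Ioo 0 1) :
    IsGreatest (range fun c => u * c - ∫ x, max (c - x) 0 ∂μ)
      (∫ τ in Ioo 0 u, quantile (cdf μ) τ) := by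
  have hsub : Ioo 0 u ⊆ Ioo (0 : ℝ) 1 := Ioo_subset_Ioo_right hu.2.le
  have hposPart (c : ℝ) :
      ∫ τ in Ioo 0 1, max (c - quantile (cdf μ) τ) 0 = ∫ x, max (c - x) 0 ∂μ :=
    integral_comp_quantile_cdf (continuous_max_sub_zero c).aestronglyMeasurable
  have hint (c : ℝ) : IntegrableOn (fun τ => c - quantile (cdf μ) τ) (Ioo 0 1) :=
    (integrableOn_const measure_Ioo_lt_top.ne).sub (integrableOn_quantile_cdf hμ)
  refine ⟨⟨quantile (cdf μ) u, ?_⟩, ?_⟩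
  · have hmax := setIntegral_eq_setIntegral_posPart (μ := volume)
      (f := fun τ => quantile (cdf μ) u - quantile (cdf μ) τ)
      measurableSet_Ioo measurableSet_Ioo hsub
      (fun τ hτ => sub_nonneg.2 <| monotoneOn_quantile_cdf ⟨hτ.1, hτ.2.trans hu.2⟩ hu hτ.2.le)
      (fun τ hτ => sub_nonpos.2 <| monotoneOn_quantile_cdf hu hτ.1 <|
        le_of_not_gt fun hτu => hτ.2 ⟨hτ.1.1, hτu⟩)
    rw [setIntegral_Ioo_quantile_cdf_sub hμ (Ioo_subset_Icc_self hu), hposPart] at hmax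
    linarith
  · rintro _ ⟨c, rfl⟩
    have hle := setIntegral_le_setIntegral_posPart (hint c) hsub
    rw [setIntegral_Ioo_quantile_cdf_sub hμ (Ioo_subset_Icc_self hu), hposPart] at hle
    dsimp only
    linarith

end Lorenz

section RandomVariable

variable {Ω : Type*} [MeasureSpace Ω] {X : Ω → ℝ} {u : ℝ}

lemma integrable_id_map (hX : Integrable X) : Integrable id ((ℙ : Measure Ω).map X) :=
  (integrable_map_measure aestronglyMeasurable_id hX.aemeasurable).2 hX

variable [IsProbabilityMeasure (ℙ : Measure Ω)]

lemma cdfOf_eq_cdf_map (hX : AEMeasurable X) : cdfOf X = cdf ((ℙ : Measure Ω).map X) := by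
  have := Measure.isProbabilityMeasure_map hX
  ext x
  rw [cdf_eq_real, measureReal_def, Measure.map_apply_of_aemeasurable hX measurableSet_Iic]
  rfl

lemma lorenz_eq_setIntegral (hX : AEMeasurable X) (hu : 0 ≤ u) :
    lorenz X u = ∫ τ in Ioo 0 u, quantile (cdf ((ℙ : Measure Ω).map X)) τ := by
  rw [lorenz, cdfOf_eq_cdf_map hX, intervalIntegral.integral_of_le hu,
    integral_Ioc_eq_integral_Ioo]

theorem isGreatest_lorenz (hX : Integrable X) (hu : u ∈ Ioo 0 1) :
    IsGreatest (range fun c => u * c - ∫ ω, max (c - X ω) 0) (lorenz X u) := by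
  have := Measure.isProbabilityMeasure_map hX.aemeasurable
  have hposPart (c : ℝ) : ∫ x, max (c - x) 0 ∂((ℙ : Measure Ω).map X) = ∫ ω, max (c - X ω) 0 :=
    integral_map hX.aemeasurable (continuous_max_sub_zero c).aestronglyMeasurable
  simpa only [lorenz_eq_setIntegral hX.aemeasurable hu.1.le, hposPart] using
    isGreatest_setIntegral_quantile_cdf (integrable_id_map hX) hu

lemma continuousOn_lorenz (hX : Integrable X) : ContinuousOn (lorenz X) (Icc 0 1) := by
  have := Measure.isProbabilityMeasure_map hX.aemeasurable
  have hq : IntegrableOn (quantile (cdfOf X)) (uIcc 0 1) := by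
    rw [uIcc_of_le zero_le_one, integrableOn_Icc_iff_integrableOn_Ioo,
      cdfOf_eq_cdf_map hX.aemeasurable]
    exact integrableOn_quantile_cdf (integrable_id_map hX)
  have := intervalIntegral.continuousOn_primitive_interval hq
  rwa [uIcc_of_le zero_le_one] at this

lemma lorenz_le_lorenz_of_integral_posPart_le {Y : Ω → ℝ} (hX : Integrable X) (hY : Integrable Y)
    (h : ∀ c, ∫ ω, max (c - X ω) 0 ≤ ∫ ω, max (c - Y ω) 0) (hu : u ∈ Ioo 0 1) :
    lorenz Y u ≤ lorenz X u := by
  obtain ⟨⟨c, hc⟩, -⟩ := isGreatest_lorenz hY hu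
  rw [← hc]
  exact (sub_le_sub_left (h c) _).trans ((isGreatest_lorenz hX hu).2 ⟨c, rfl⟩)

end RandomVariable

theorem ConvexOn.integral_comp_le_of_condExp_ae_eq {Ω : Type*} {m m₀ : MeasurableSpace Ω}
    {μ : Measure Ω} (hm : m ≤ m₀) [SigmaFinite (μ.trim hm)] {φ : ℝ → ℝ}
    (hφ : ConvexOn ℝ univ φ) (hφ_cont : LowerSemicontinuous φ) {X Y : Ω → ℝ}
    (hY : Integrable Y μ) (hφX : Integrable (φ ∘ X) μ) (hφY : Integrable (φ ∘ Y) μ)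
    (hXY : μ[Y | m] =ᵐ[μ] X) :
    ∫ ω, φ (X ω) ∂μ ≤ ∫ ω, φ (Y ω) ∂μ :=
  calc ∫ ω, φ (X ω) ∂μ = ∫ ω, φ (μ[Y | m] ω) ∂μ := integral_congr_ae (hXY.fun_comp φ).symm
    _ ≤ ∫ ω, μ[φ ∘ Y | m] ω ∂μ :=
        integral_mono_ae (hφX.congr (hXY.fun_comp φ).symm) integrable_condExp
          (hφ.map_condExp_le_univ hm hφ_cont hY hφY)
    _ = ∫ ω, φ (Y ω) ∂μ := integral_condExp hm

theorem gini_nondecreasing_general {Ω : Type*} [MeasureSpace Ω]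
    [IsProbabilityMeasure (ℙ : Measure Ω)]
    (X₁ X₂ : Ω → ℝ) (hm₁ : Measurable X₁)
    (h₁ : Integrable X₁) (h₂ : Integrable X₂)
    (hmart : (ℙ : Measure Ω)[X₂ | MeasurableSpace.comap X₁ (borel ℝ)] =ᵐ[ℙ] X₁) :
    gini X₁ ≤ gini X₂ := by
  have hle : MeasurableSpace.comap X₁ (borel ℝ) ≤ ‹MeasureSpace Ω›.toMeasurableSpace := by
    rw [← BorelSpace.measurable_eq]
    exact hm₁.comap_le
  have hposPart (c : ℝ) : ∫ ω, max (c - X₁ ω) 0 ≤ ∫ ω, max (c - X₂ ω) 0 :=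
    (convexOn_max_sub_zero c).integral_comp_le_of_condExp_ae_eq hle
      (continuous_max_sub_zero c).lowerSemicontinuous h₂
      ((integrable_const c).sub h₁).pos_part ((integrable_const c).sub h₂).pos_part hmart
  have hL : ∫ u in (0 : ℝ)..1, lorenz X₂ u ≤ ∫ u in (0 : ℝ)..1, lorenz X₁ u :=
    intervalIntegral.integral_mono_on_of_le_Ioo zero_le_one
      ((continuousOn_lorenz h₂).intervalIntegrable_of_Icc zero_le_one)
      ((continuousOn_lorenz h₁).intervalIntegrable_of_Icc zero_le_one)
      fun u hu => lorenz_le_lorenz_of_integral_posPart_le h₁ h₂ hposPart hu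
  rw [gini, gini]
  linarith

/-- Second law of martingales: the Gini index is nondecreasing along a fair
gamble: if `E[X₂|X₁] = X₁` a.s. and both have mean one, `G(X₁) ≤ G(X₂)`. -/
theorem gini_nondecreasing {Ω : Type*} [MeasureSpace Ω]
    [IsProbabilityMeasure (ℙ : Measure Ω)]
    (X₁ X₂ : Ω → ℝ) (hm₁ : Measurable X₁) (hm₂ : Measurable X₂)
    (h₁ : Integrable X₁) (h₂ : Integrable X₂)
    (hpos₁ : ∀ ω, 0 ≤ X₁ ω) (hpos₂ : ∀ ω, 0 ≤ X₂ ω)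
    (hmean₁ : ∫ ω, X₁ ω = 1) (hmean₂ : ∫ ω, X₂ ω = 1)
    (hmart : (ℙ : Measure Ω)[X₂ | MeasurableSpace.comap X₁ (borel ℝ)] =ᵐ[ℙ] X₁) :
    gini X₁ ≤ gini X₂ :=
  gini_nondecreasing_general X₁ X₂ hm₁ h₁ h₂ hmart
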